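/- (Lemma 4, time-and-frequency asynchronous case, small-Ω direction.) For positive integers L, M, Q, D with Q ≥ L ≥ 6 and M ≥ 1, and Ω ∈ (0, π], set P = L + D, define S(Ω) = 2·⌊QΩ/(2π)⌋ + 1 if Ω ≠ π and S(Ω) = 2·⌊Q/2⌋ if Ω = π, and define F₂(D, Ω) = (D+1)·S(Ω)·(8P² + 8PM + 10P + 6M − 5) and F₃(D) = 20P²·log₂P + 86P² + 16PM + 6(D + 5/3)P + 15(D+1)Q·log₂Q. If Ω < (π/Q)·( (90P + 16M)/((D+1)(12P + 10M)) − 1 ), then F₂(D, Ω) < F₃(D). -/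
import Mathlib


set_option maxHeartbeats 1000000 in
theorem stmt_18 (L M Q D : ℕ) (hL : 6 ≤ L) (hLQ : L ≤ Q) (hM : 1 ≤ M) (hD : 1 ≤ D)
    (Ω : ℝ) (hΩ : Ω ∈ Set.Ioc 0 Real.pi) :
    let P : ℝ := (L : ℝ) + (D : ℝ)
    let S : ℝ :=
      if Ω ≠ Real.pi then 2 * (⌊(Q : ℝ) * Ω / (2 * Real.pi)⌋ : ℝ) + 1
      else 2 * (⌊(Q : ℝ) / 2⌋ : ℝ)
    let F2 : ℝ := ((D : ℝ) + 1) * S *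
      (8 * P ^ 2 + 8 * P * (M : ℝ) + 10 * P + 6 * (M : ℝ) - 5)
    let F3 : ℝ := 20 * P ^ 2 * Real.logb 2 P + 86 * P ^ 2 + 16 * P * (M : ℝ) +
      6 * ((D : ℝ) + 5 / 3) * P + 15 * ((D : ℝ) + 1) * (Q : ℝ) * Real.logb 2 (Q : ℝ)
    Ω < (Real.pi / (Q : ℝ)) *
        ((90 * P + 16 * (M : ℝ)) / (((D : ℝ) + 1) * (12 * P + 10 * (M : ℝ))) - 1) →
      F2 < F3 := by
  intro P S F2 F3 hΩlt
  have hπ : (0:ℝ) < Real.pi := Real.pi_pos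
  have hD1 : (1:ℝ) ≤ (D:ℝ) := by exact_mod_cast hD
  have hM1 : (1:ℝ) ≤ (M:ℝ) := by exact_mod_cast hM
  have hL6 : (6:ℝ) ≤ (L:ℝ) := by exact_mod_cast hL
  have hQ6 : (6:ℝ) ≤ (Q:ℝ) := by exact_mod_cast hL.trans hLQ
  have hQpos : (0:ℝ) < (Q:ℝ) := by linarith
  have hP7 : (7:ℝ) ≤ P := by simp only [P]; linarith
  have hPpos : (0:ℝ) < P := by linarith
  set R : ℝ := (90 * P + 16 * (M:ℝ)) / (((D:ℝ) + 1) * (12 * P + 10 * (M:ℝ))) with hRdef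
  set C : ℝ := 8 * P ^ 2 + 8 * P * (M:ℝ) + 10 * P + 6 * (M:ℝ) - 5 with hCdef
  have hC : (0:ℝ) < C := by simp only [hCdef]; nlinarith
  have hden : (0:ℝ) < 12 * P + 10 * (M:ℝ) := by nlinarith
  -- Step 1: S < R
  have hS : S < R := by
    have hQΩ : (Q:ℝ) * Ω < Real.pi * (R - 1) := by
      have := mul_lt_mul_of_pos_left hΩlt hQpos
      have heq : (Q:ℝ) * (Real.pi / (Q:ℝ) * (R - 1)) = Real.pi * (R - 1) := by
        field_simp
      linarith [heq ▸ this]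
    by_cases h : Ω ≠ Real.pi
    · have hfl : ((⌊(Q:ℝ) * Ω / (2 * Real.pi)⌋ : ℤ) : ℝ) ≤ (Q:ℝ) * Ω / (2 * Real.pi) :=
        Int.floor_le _
      have h2π : (0:ℝ) < 2 * Real.pi := by linarith
      have h1 : ((⌊(Q:ℝ) * Ω / (2 * Real.pi)⌋ : ℤ) : ℝ) * (2 * Real.pi) ≤ (Q:ℝ) * Ω :=
        (le_div_iff₀ h2π).mp hfl
      simp only [S, if_pos h]
      nlinarith
    · have hfl : ((⌊(Q:ℝ) / 2⌋ : ℤ) : ℝ) ≤ (Q:ℝ) / 2 := Int.floor_le _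
      have h' : Ω = Real.pi := not_not.mp h
      rw [h'] at hQΩ
      have hQR : (Q:ℝ) < R - 1 := by nlinarith
      simp only [S]
      rw [if_neg h]
      linarith
  -- Step 2: lower bound on F3 via log bounds
  have hlog4 : Real.logb 2 (4:ℝ) = 2 := by
    rw [show (4:ℝ) = 2 ^ (2:ℕ) by norm_num, Real.logb_pow, Real.logb_self_eq_one] <;> norm_num
  have hlogP : (2:ℝ) ≤ Real.logb 2 P := by
    have h := Real.logb_le_logb_of_le (b := 2) (x := 4) (y := P) (by norm_num) (by norm_num)
      (by linarith)
    linarith [hlog4]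
  have hlogQ : (2:ℝ) ≤ Real.logb 2 (Q:ℝ) := by
    have h := Real.logb_le_logb_of_le (b := 2) (x := 4) (y := (Q:ℝ)) (by norm_num) (by norm_num)
      (by linarith)
    linarith [hlog4]
  have hG : 126 * P ^ 2 + 16 * P * (M:ℝ) + 16 * P ≤ F3 := by
    simp only [F3]
    nlinarith [mul_le_mul_of_nonneg_left hlogP (by positivity : (0:ℝ) ≤ 20 * P ^ 2),
      mul_le_mul_of_nonneg_left hlogQ (by positivity : (0:ℝ) ≤ 15 * ((D:ℝ) + 1) * (Q:ℝ))]
  -- Step 3: (D+1) * R * C ≤ F3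
  have hDR : ((D:ℝ) + 1) * R = (90 * P + 16 * (M:ℝ)) / (12 * P + 10 * (M:ℝ)) := by
    rw [hRdef]
    field_simp
  have hRC : ((D:ℝ) + 1) * R * C ≤ F3 := by
    rw [hDR, div_mul_eq_mul_div, div_le_iff₀ hden]
    have hpoly : (90 * P + 16 * (M:ℝ)) * C ≤
        (126 * P ^ 2 + 16 * P * (M:ℝ) + 16 * P) * (12 * P + 10 * (M:ℝ)) := by
      simp only [hCdef]
      nlinarith [mul_nonneg (mul_nonneg hPpos.le hPpos.le) (by linarith : (0:ℝ) ≤ (M:ℝ)),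
        mul_nonneg (by linarith : (0:ℝ) ≤ P - 7) (sq_nonneg P),
        mul_nonneg (mul_nonneg (by linarith : (0:ℝ) ≤ P - 7) hPpos.le)
          (by linarith : (0:ℝ) ≤ (M:ℝ)),
        mul_nonneg (mul_nonneg hPpos.le (by linarith : (0:ℝ) ≤ (M:ℝ)))
          (by linarith : (0:ℝ) ≤ (M:ℝ)),
        mul_nonneg (mul_nonneg (by linarith : (0:ℝ) ≤ P - 7) (by linarith : (0:ℝ) ≤ (M:ℝ)))
          (by linarith : (0:ℝ) ≤ (M:ℝ))]
    calc (90 * P + 16 * (M:ℝ)) * C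
        ≤ (126 * P ^ 2 + 16 * P * (M:ℝ) + 16 * P) * (12 * P + 10 * (M:ℝ)) := hpoly
      _ ≤ F3 * (12 * P + 10 * (M:ℝ)) := mul_le_mul_of_nonneg_right hG hden.le
  -- combine
  have hF2 : F2 < ((D:ℝ) + 1) * R * C := by
    simp only [F2, ← hCdef]
    have := mul_lt_mul_of_pos_right (mul_lt_mul_of_pos_left hS
      (by linarith : (0:ℝ) < (D:ℝ) + 1)) hC
    linarith
  linarith
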